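/- The Kreisel–Putnam axiom (¬p → (q ∨ r)) → ((¬p → q) ∨ (¬p → r)) is valid in every Medvedev frame M_n. -/

import Mathlib

inductive Fml : Type where
  | atom : ℕ → Fml
  | bot  : Fml
  | and  : Fml → Fml → Fml
  | or   : Fml → Fml → Fml
  | imp  : Fml → Fml → Fml
deriving DecidableEq

/-- Intuitionistic negation: ¬φ := φ → ⊥. -/
def Fml.neg (φ : Fml) : Fml := .imp φ .bot

/-- Biconditional. -/
def Fml.iff (φ ψ : Fml) : Fml := .and (.imp φ ψ) (.imp ψ φ)

/-- Disjunction of a list of formulas (empty disjunction is ⊥). -/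
def disj : List Fml → Fml
  | [] => .bot
  | [φ] => φ
  | φ :: l => .or φ (disj l)

/-- Conjunction of a list of formulas (empty conjunction is ¬⊥). -/
def conj : List Fml → Fml
  | [] => Fml.neg .bot
  | [φ] => φ
  | φ :: l => .and φ (conj l)

/-- Substitution, extended homomorphically. -/
def Fml.subst (σ : ℕ → Fml) : Fml → Fml
  | .atom p => σ p
  | .bot => .bot
  | .and φ ψ => .and (φ.subst σ) (ψ.subst σ)
  | .or φ ψ => .or (φ.subst σ) (ψ.subst σ)
  | .imp φ ψ => .imp (φ.subst σ) (ψ.subst σ)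

/-- Hilbert-style provability for intuitionistic logic plus extra axioms `Ax`. -/
inductive Prov (Ax : Fml → Prop) : Fml → Prop where
  | ax {φ} : Ax φ → Prov Ax φ
  | k {φ ψ} : Prov Ax (.imp φ (.imp ψ φ))
  | s {φ ψ χ} : Prov Ax (.imp (.imp φ (.imp ψ χ)) (.imp (.imp φ ψ) (.imp φ χ)))
  | andI {φ ψ} : Prov Ax (.imp φ (.imp ψ (.and φ ψ)))
  | andE₁ {φ ψ} : Prov Ax (.imp (.and φ ψ) φ)
  | andE₂ {φ ψ} : Prov Ax (.imp (.and φ ψ) ψ)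
  | orI₁ {φ ψ} : Prov Ax (.imp φ (.or φ ψ))
  | orI₂ {φ ψ} : Prov Ax (.imp ψ (.or φ ψ))
  | orE {φ ψ χ} : Prov Ax (.imp (.imp φ χ) (.imp (.imp ψ χ) (.imp (.or φ ψ) χ)))
  | exfalso {φ} : Prov Ax (.imp .bot φ)
  | mp {φ ψ} : Prov Ax (.imp φ ψ) → Prov Ax φ → Prov Ax ψ

/-- No extra axioms: pure intuitionistic logic is `Prov NoAx`. -/
def NoAx : Fml → Prop := fun _ => False

/-- Instances of the weak Kreisel–Putnam axiom schema. -/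
def wKPAx : Fml → Prop := fun φ =>
  ∃ a b c : Fml, φ = .imp (.imp a.neg (.or b.neg c.neg))
    (.or (.imp a.neg b.neg) (.imp a.neg c.neg))

/-- Intuitionistic Kripke forcing over a preordered set of worlds. -/
def Force {W : Type} [Preorder W] (V : W → ℕ → Prop) : W → Fml → Prop
  | w, .atom p => V w p
  | _, .bot => False
  | w, .and φ ψ => Force V w φ ∧ Force V w ψ
  | w, .or φ ψ => Force V w φ ∨ Force V w ψ
  | w, .imp φ ψ => ∀ v, w ≤ v → Force V v φ → Force V v ψ

/-- A valuation is monotone (persistent). -/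
def MonoVal {W : Type} [Preorder W] (V : W → ℕ → Prop) : Prop :=
  ∀ ⦃w w'⦄, w ≤ w' → ∀ p, V w p → V w' p

/-- The Medvedev frame `M n`: nonempty subsets of `Fin n` ordered by reverse inclusion. -/
def Med (n : ℕ) : Type := {I : Finset (Fin n) // I.Nonempty}

instance {n : ℕ} : PartialOrder (Med n) where
  le I J := J.1 ⊆ I.1
  le_refl I := Finset.Subset.refl _
  le_trans I J K h h' := Finset.Subset.trans h' h
  le_antisymm I J h h' := Subtype.ext (Finset.Subset.antisymm h' h)

instance {n : ℕ} : DecidableEq (Med n) := Subtype.instDecidableEq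

/-- Validity on the Medvedev frame `M n`. -/
def MedValid (n : ℕ) (φ : Fml) : Prop :=
  ∀ V : Med n → ℕ → Prop, MonoVal V → ∀ w, Force V w φ

/-- Medvedev's logic of finite problems. -/
def ML (φ : Fml) : Prop := ∀ n, MedValid n φ

/-- The singleton world `{i}` of `M n`. -/
def single {n : ℕ} (i : Fin n) : Med n := ⟨{i}, Finset.singleton_nonempty i⟩

/-- Exponentiation on ℕ∞ (anything involving ∞ gives ∞). -/
def epow : ℕ∞ → ℕ∞ → ℕ∞
  | some a, some b => some (a ^ b)
  | _, _ => ⊤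

/-- Kreisel–Putnam rank. -/
def rank : Fml → ℕ∞
  | .imp _ .bot => 1
  | .or φ ψ => rank φ + rank ψ
  | .and φ ψ => rank φ * rank ψ
  | .imp φ ψ => epow (rank ψ) (rank φ)
  | _ => ⊤

/-- Disjunction of `α i` over a finite index set. -/
noncomputable def bigOrOn {n : ℕ} (α : Fin n → Fml) (I : Finset (Fin n)) : Fml :=
  disj (I.toList.map α)

/-- `α_I := ¬¬⋁_{i ∈ I} α_i`. -/
noncomputable def alphaF {n : ℕ} (α : Fin n → Fml) (I : Finset (Fin n)) : Fml :=
  Fml.neg (Fml.neg (bigOrOn α I))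

/-!
A Kripke frame validates the Kreisel–Putnam axiom with antecedent `¬a` as soon as, above every
world, the worlds forcing `¬a` have a least element whenever there are any: that least world
decides which disjunct holds, and persistence carries it to every other `¬a`-world.
In `M n` a world forces `¬a` exactly when none of its singletons forces `a`, so the least `¬a`-world
above `w` is the set of those `i ∈ w` whose singleton does not force `a`.
-/

def Fml.kp (a b c : Fml) : Fml :=
  .imp (.imp a.neg (.or b c)) (.or (.imp a.neg b) (.imp a.neg c))

section

variable {W : Type} [Preorder W] {V : W → ℕ → Prop}

theorem Force.mono (hV : MonoVal V) {w v : W} (hwv : w ≤ v) :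
    ∀ {φ : Fml}, Force V w φ → Force V v φ
  | .atom p, h => hV hwv p h
  | .bot, h => h
  | .and _ _, ⟨h₁, h₂⟩ => ⟨Force.mono hV hwv h₁, Force.mono hV hwv h₂⟩
  | .or _ _, h => h.imp (Force.mono hV hwv) (Force.mono hV hwv)
  | .imp _ _, h => fun u hvu => h u (hwv.trans hvu)

theorem force_kp_of_isLeast (hV : MonoVal V) {a : Fml}
    (hleast : ∀ w : W, {v | w ≤ v ∧ Force V v a.neg}.Nonempty →
      ∃ t, IsLeast {v | w ≤ v ∧ Force V v a.neg} t)
    (b c : Fml) (u : W) : Force V u (a.kp b c) := by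
  intro w _ hw
  by_cases hne : {v | w ≤ v ∧ Force V v a.neg}.Nonempty
  · obtain ⟨t, ⟨hwt, ht⟩, hmin⟩ := hleast w hne
    rcases hw t hwt ht with hb | hc
    · exact .inl fun v hwv hv => Force.mono hV (hmin ⟨hwv, hv⟩) hb
    · exact .inr fun v hwv hv => Force.mono hV (hmin ⟨hwv, hv⟩) hc
  · exact .inl fun v hwv hv => (hne ⟨v, hwv, hv⟩).elim

end

namespace Med

variable {n : ℕ} {V : Med n → ℕ → Prop}

theorem le_single_of_mem {w : Med n} {i : Fin n} (hi : i ∈ w.1) : w ≤ single i :=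
  Finset.singleton_subset_iff.mpr hi

theorem force_neg_iff (hV : MonoVal V) {φ : Fml} {w : Med n} :
    Force V w φ.neg ↔ ∀ i ∈ w.1, ¬ Force V (single i) φ := by
  refine ⟨fun h i hi => h _ (le_single_of_mem hi), fun h v hwv hv => ?_⟩
  obtain ⟨i, hi⟩ := v.2
  exact h i (hwv hi) (Force.mono hV (le_single_of_mem hi) hv)

theorem exists_isLeast_force_neg (hV : MonoVal V) (φ : Fml) (w : Med n)
    (hne : {v | w ≤ v ∧ Force V v φ.neg}.Nonempty) :
    ∃ t, IsLeast {v | w ≤ v ∧ Force V v φ.neg} t := by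
  classical
  set T := w.1.filter fun i => ¬ Force V (single i) φ
  have hT : T.Nonempty := by
    obtain ⟨v, hwv, hv⟩ := hne
    obtain ⟨i, hi⟩ := v.2
    exact ⟨i, Finset.mem_filter.mpr ⟨hwv hi, (force_neg_iff hV).mp hv i hi⟩⟩
  refine ⟨⟨T, hT⟩, ⟨Finset.filter_subset _ _, (force_neg_iff hV).mpr ?_⟩, ?_⟩
  · exact fun i hi => (Finset.mem_filter.mp hi).2
  · rintro v ⟨hwv, hv⟩ i hi
    exact Finset.mem_filter.mpr ⟨hwv hi, (force_neg_iff hV).mp hv i hi⟩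

theorem medValid_kp (n : ℕ) (a b c : Fml) : MedValid n (a.kp b c) :=
  fun _ hV => force_kp_of_isLeast hV (exists_isLeast_force_neg hV a) b c

end Med

/-- The Kreisel–Putnam axiom
`(¬p → (q ∨ r)) → ((¬p → q) ∨ (¬p → r))` is valid in every Medvedev frame. -/
theorem stmt4 (n : ℕ) :
    MedValid n (.imp (.imp (Fml.atom 0).neg (.or (.atom 1) (.atom 2)))
      (.or (.imp (Fml.atom 0).neg (.atom 1)) (.imp (Fml.atom 0).neg (.atom 2)))) :=
  Med.medValid_kp n _ _ _
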